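/- Let Z ~ Binomial(m, s/m) with 1 <= s <= m/2. Then E| sqrt(Z) - sqrt(s) | >= c for an absolute constant c > 0. -/

import Mathlib

/-
Write `Z = ∑ X i`, a Binomial(m, p) variable with `p = s / m ≤ 1 / 2`, and
`v = E (Z - s)² = s (1 - p)`, so that `s / 2 ≤ v` and in particular `1 / 2 ≤ v`. The fourth
moment of a sum of independent centred variables is at most `∑ E Yᵢ⁴ + 3 (∑ E Yᵢ²)²`, which here
gives `E (Z - s)⁴ ≤ v + 3 v² ≤ 5 v²`. Paley–Zygmund applied to `(Z - s)²` then gives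
`|Z - s| ≥ √v / 2` with probability at least `9 / 80`, and Markov's inequality gives `Z < 32 s`
with probability at least `31 / 32`. On both events `|√Z - √s| = |Z - s| / (√Z + √s) ≥ 1 / 20`,
and both occur with probability at least `1 / 20`.
-/

open MeasureTheory ProbabilityTheory Real
open scoped BigOperators ENNReal

/-- The subgaussian (psi_2) norm of a real random variable. -/
noncomputable def psi2 {Ω : Type*} [MeasurableSpace Ω] (μ : Measure Ω) (Z : Ω → ℝ) : ℝ :=
  sInf {t : ℝ | 0 < t ∧ ∫ ω, Real.exp (Z ω ^ 2 / t ^ 2) ∂μ ≤ 2}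

/-- A real random variable is subgaussian. -/
def Subgaussian {Ω : Type*} [MeasurableSpace Ω] (μ : Measure Ω) (Z : Ω → ℝ) : Prop :=
  ∃ t : ℝ, 0 < t ∧ ∫ ω, Real.exp (Z ω ^ 2 / t ^ 2) ∂μ ≤ 2

/-- The subgaussian norm of a random vector: sup of marginal subgaussian norms. -/
noncomputable def vpsi2 {Ω : Type*} [MeasurableSpace Ω] (μ : Measure Ω) {m : ℕ}
    (V : Ω → EuclideanSpace ℝ (Fin m)) : ℝ :=
  ⨆ u : {u : EuclideanSpace ℝ (Fin m) // ‖u‖ = 1},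
    psi2 μ (fun ω => (inner ℝ (V ω) (u : EuclideanSpace ℝ (Fin m)) : ℝ))

/-- A random vector is subgaussian: a uniform witness over all directions. -/
def SubgaussianVec {Ω : Type*} [MeasurableSpace Ω] (μ : Measure Ω) {m : ℕ}
    (V : Ω → EuclideanSpace ℝ (Fin m)) : Prop :=
  ∃ t : ℝ, 0 < t ∧ ∀ u : EuclideanSpace ℝ (Fin m), ‖u‖ = 1 →
    ∫ ω, Real.exp ((inner ℝ (V ω) u : ℝ) ^ 2 / t ^ 2) ∂μ ≤ 2

/-- The Bernoulli(p) law on `ℝ`, taking value `1` with probability `p`. -/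
noncomputable def bernoulliLaw (p : ℝ) : Measure ℝ :=
  ENNReal.ofReal p • Measure.dirac 1 + ENNReal.ofReal (1 - p) • Measure.dirac 0

lemma sq_le_mul_of_forall_pos_le {a B P : ℝ} (ha : 0 ≤ a) (hB : 0 ≤ B) (hP : 0 ≤ P)
    (h : ∀ l > 0, a ≤ B / (4 * l) + l * P) : a ^ 2 ≤ B * P := by
  by_contra! hlt
  have ha' : 0 < a := by nlinarith [mul_nonneg hB hP]
  rcases hP.eq_or_lt with rfl | hP'
  · have := h ((B + 1) / (2 * a)) (by positivity)
    field_simp at this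
    nlinarith
  · have := h (a / (2 * P)) (by positivity)
    field_simp at this
    nlinarith

lemma one_div_twenty_le_abs_sqrt_sub_sqrt {x y : ℝ} (hx : 0 ≤ x) (hy : 0 < y)
    (hxy : y ≤ 8 * (x - y) ^ 2) (hx32 : x < 32 * y) : 1 / 20 ≤ |√x - √y| := by
  obtain ⟨a, ha, rfl⟩ : ∃ a, 0 ≤ a ∧ x = a ^ 2 := ⟨√x, sqrt_nonneg x, (sq_sqrt hx).symm⟩
  obtain ⟨b, hb, rfl⟩ : ∃ b, 0 < b ∧ y = b ^ 2 := ⟨√y, sqrt_pos.2 hy, (sq_sqrt hy.le).symm⟩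
  rw [sqrt_sq ha, sqrt_sq hb.le]
  have hab : a + b ≤ 7 * b := by nlinarith
  have : b ^ 2 ≤ 392 * b ^ 2 * (a - b) ^ 2 := by
    calc b ^ 2 ≤ 8 * ((a ^ 2 - b ^ 2) ^ 2) := hxy
      _ = 8 * ((a - b) ^ 2 * (a + b) ^ 2) := by ring
      _ ≤ 8 * ((a - b) ^ 2 * (7 * b) ^ 2) := by gcongr
      _ = 392 * b ^ 2 * (a - b) ^ 2 := by ring
  have : (1 / 20) ^ 2 ≤ |a - b| ^ 2 := by
    rw [sq_abs]; nlinarith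
  exact (sq_le_sq₀ (by norm_num) (abs_nonneg _)).1 this

lemma abs_sqrt_sub_sqrt_le_abs_sub_div {x y : ℝ} (hx : 0 ≤ x) (hy : 0 < y) :
    |√x - √y| ≤ |x - y| / √y := by
  have hb := sqrt_pos.2 hy
  rw [le_div_iff₀ hb, ← sq_sqrt hx, ← sq_sqrt hy.le, sqrt_sq (sqrt_nonneg x), sqrt_sq hb.le,
    show √x ^ 2 - √y ^ 2 = (√x - √y) * (√x + √y) by ring, abs_mul]
  exact mul_le_mul_of_nonneg_left (by rw [abs_of_pos (by positivity)]; linarith [sqrt_nonneg x])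
    (abs_nonneg _)

lemma MeasureTheory.MemLp.integrable_pow_of_le {Ω : Type*} [MeasurableSpace Ω] {μ : Measure Ω}
    [IsFiniteMeasure μ] {f : Ω → ℝ} {p k : ℕ} (hf : MemLp f p μ) (hk : k ≤ p) :
    Integrable (fun ω ↦ f ω ^ k) μ := by
  refine ((hf.mono_exponent (by exact_mod_cast hk)).integrable_norm_pow').mono'
    (hf.aestronglyMeasurable.pow k) (Filter.Eventually.of_forall fun ω ↦ ?_)
  simp [norm_pow]

lemma integral_finsetSum_eq_zero {Ω ι : Type*} [MeasurableSpace Ω] {μ : Measure Ω}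
    {Y : ι → Ω → ℝ} (hY : ∀ i, Integrable (Y i) μ) (hmean : ∀ i, ∫ ω, Y i ω ∂μ = 0)
    (T : Finset ι) : ∫ ω, ∑ i ∈ T, Y i ω ∂μ = 0 := by
  rw [integral_finsetSum T fun i _ ↦ hY i]
  exact Finset.sum_eq_zero fun i _ ↦ hmean i

section Moments

variable {Ω : Type*} [MeasurableSpace Ω] {μ : Measure Ω} [IsProbabilityMeasure μ]

theorem paley_zygmund {W : Ω → ℝ} (hWm : Measurable W) (hW : MemLp W 2 μ)
    (hW0 : 0 ≤ ∫ ω, W ω ∂μ) {θ : ℝ} (hθ0 : 0 ≤ θ) (hθ1 : θ ≤ 1) :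
    (1 - θ) ^ 2 * (∫ ω, W ω ∂μ) ^ 2
      ≤ (∫ ω, W ω ^ 2 ∂μ) * μ.real {ω | θ * ∫ ω, W ω ∂μ ≤ W ω} := by
  set t := θ * ∫ ω, W ω ∂μ
  set A := {ω | t ≤ W ω}
  have hA : MeasurableSet A := measurableSet_le measurable_const hWm
  have hW2 : Integrable (fun ω ↦ W ω ^ 2) μ := hW.integrable_sq
  rw [← mul_pow]
  refine sq_le_mul_of_forall_pos_le (by nlinarith) (integral_nonneg fun ω ↦ sq_nonneg _)
    measureReal_nonneg fun l hl ↦ ?_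
  -- on `A` this is AM-GM, `x ≤ x ^ 2 / (4 * l) + l`, and off `A` it is `W < t`
  have hpt : ∀ ω, W ω ≤ t + W ω ^ 2 / (4 * l) + A.indicator (fun _ ↦ l) ω := by
    intro ω
    by_cases hω : ω ∈ A
    · rw [Set.indicator_of_mem hω]
      have : W ω ≤ W ω ^ 2 / (4 * l) + l := by
        rw [div_add' _ _ _ (by positivity), le_div_iff₀ (by positivity)]
        nlinarith [sq_nonneg (W ω - 2 * l)]
      linarith [mul_nonneg hθ0 hW0]
    · rw [Set.indicator_of_notMem hω]
      have : 0 ≤ W ω ^ 2 / (4 * l) := by positivity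
      linarith [show W ω < t from lt_of_not_ge hω]
  have hint : Integrable (fun ω ↦ t + W ω ^ 2 / (4 * l)) μ :=
    (integrable_const t).add (hW2.div_const _)
  have := integral_mono (g := fun ω ↦ t + W ω ^ 2 / (4 * l) + A.indicator (fun _ ↦ l) ω)
    (hW.integrable one_le_two) (hint.add ((integrable_const l).indicator hA)) hpt
  rw [integral_add hint ((integrable_const l).indicator hA),
    integral_add (integrable_const t) (hW2.div_const _), integral_indicator_const _ hA,
    integral_const, integral_div, probReal_univ, one_smul, smul_eq_mul] at this
  linarith

lemma ProbabilityTheory.IndepFun.integral_add_pow_four {S V : Ω → ℝ} (hSV : IndepFun S V μ)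
    (hS : MemLp S 4 μ) (hV : MemLp V 4 μ) (hS0 : ∫ ω, S ω ∂μ = 0) (hV0 : ∫ ω, V ω ∂μ = 0) :
    ∫ ω, (S ω + V ω) ^ 4 ∂μ
      = ∫ ω, S ω ^ 4 ∂μ + 6 * (∫ ω, S ω ^ 2 ∂μ) * (∫ ω, V ω ^ 2 ∂μ) + ∫ ω, V ω ^ 4 ∂μ := by
  have hmul : ∀ a b, a ≤ 4 → b ≤ 4 → Integrable (fun ω ↦ S ω ^ a * V ω ^ b) μ ∧
      ∫ ω, S ω ^ a * V ω ^ b ∂μ = (∫ ω, S ω ^ a ∂μ) * ∫ ω, V ω ^ b ∂μ := by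
    intro a b ha hb
    have h := hSV.comp (measurable_id.pow_const a) (measurable_id.pow_const b)
    exact ⟨h.integrable_mul (hS.integrable_pow_of_le ha) (hV.integrable_pow_of_le hb),
      h.integral_mul_eq_mul_integral (hS.integrable_pow_of_le ha).1 (hV.integrable_pow_of_le hb).1⟩
  obtain ⟨h31, e31⟩ := hmul 3 1 (by norm_num) (by norm_num)
  obtain ⟨h22, e22⟩ := hmul 2 2 (by norm_num) (by norm_num)
  obtain ⟨h13, e13⟩ := hmul 1 3 (by norm_num) (by norm_num)
  simp only [pow_one] at e31 e13 h31 h13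
  have h4S := hS.integrable_pow_of_le (k := 4) le_rfl
  have h4V := hV.integrable_pow_of_le (k := 4) le_rfl
  have h31' := h31.const_mul 4
  have h22' := h22.const_mul 6
  have h13' := h13.const_mul 4
  calc ∫ ω, (S ω + V ω) ^ 4 ∂μ
      = ∫ ω, (S ω ^ 4 + 4 * (S ω ^ 3 * V ω) + 6 * (S ω ^ 2 * V ω ^ 2)
          + 4 * (S ω * V ω ^ 3) + V ω ^ 4) ∂μ := by congr 1; ext ω; ring
    _ = ∫ ω, S ω ^ 4 ∂μ + 4 * ∫ ω, S ω ^ 3 * V ω ∂μ + 6 * ∫ ω, S ω ^ 2 * V ω ^ 2 ∂μ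
          + 4 * ∫ ω, S ω * V ω ^ 3 ∂μ + ∫ ω, V ω ^ 4 ∂μ := by
      rw [integral_add (by fun_prop) h4V, integral_add (by fun_prop) h13',
        integral_add (by fun_prop) h22', integral_add h4S h31', integral_const_mul,
        integral_const_mul, integral_const_mul]
    _ = _ := by rw [e31, e22, e13, hS0, hV0]; ring

variable {ι : Type*} {Y : ι → Ω → ℝ}

lemma integral_sum_sq_of_indepFun (hY : ∀ i, MemLp (Y i) 2 μ)
    (hindep : Pairwise fun i j ↦ IndepFun (Y i) (Y j) μ) (hmean : ∀ i, ∫ ω, Y i ω ∂μ = 0)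
    (T : Finset ι) :
    ∫ ω, (∑ i ∈ T, Y i ω) ^ 2 ∂μ = ∑ i ∈ T, ∫ ω, Y i ω ^ 2 ∂μ := by
  have hS0 : ∫ ω, (∑ i ∈ T, Y i) ω ∂μ = 0 := by
    simpa only [Finset.sum_apply] using
      integral_finsetSum_eq_zero (fun i ↦ (hY i).integrable one_le_two) hmean T
  have hsum := IndepFun.variance_sum (s := T) (fun i _ ↦ hY i) fun i _ j _ hij ↦ hindep hij
  rw [variance_of_integral_eq_zero
    (memLp_finsetSum' T fun i _ ↦ hY i).aestronglyMeasurable.aemeasurable hS0,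
    Finset.sum_congr rfl fun i _ ↦
      variance_of_integral_eq_zero (hY i).aestronglyMeasurable.aemeasurable (hmean i)] at hsum
  simpa only [Finset.sum_apply] using hsum

lemma integral_sum_pow_four_le (hY : ∀ i, MemLp (Y i) 4 μ) (hindep : iIndepFun Y μ)
    (hmean : ∀ i, ∫ ω, Y i ω ∂μ = 0) (T : Finset ι) :
    ∫ ω, (∑ i ∈ T, Y i ω) ^ 4 ∂μ
      ≤ ∑ i ∈ T, ∫ ω, Y i ω ^ 4 ∂μ + 3 * (∑ i ∈ T, ∫ ω, Y i ω ^ 2 ∂μ) ^ 2 := by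
  classical
  induction T using Finset.induction_on with
  | empty => simp
  | @insert j T hj ih =>
    have hindepS : IndepFun (fun ω ↦ ∑ i ∈ T, Y i ω) (Y j) μ := by
      simpa [Finset.sum_fn] using
        hindep.indepFun_finsetSum_of_notMem₀ (fun i ↦ (hY i).aestronglyMeasurable.aemeasurable) hj
    have hS0 := integral_finsetSum_eq_zero (fun i ↦ (hY i).integrable (by norm_num)) hmean T
    have hS2 := integral_sum_sq_of_indepFun (fun i ↦ (hY i).mono_exponent (by norm_num))
      (fun i j hij ↦ hindep.indepFun hij) hmean T
    have hV2 : 0 ≤ ∫ ω, Y j ω ^ 2 ∂μ := integral_nonneg fun ω ↦ sq_nonneg _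
    simp only [Finset.sum_insert hj, add_comm (Y j _)]
    rw [hindepS.integral_add_pow_four (memLp_finsetSum T fun i _ ↦ hY i) (hY j) hS0 (hmean j), hS2]
    nlinarith [ih]

theorem one_div_four_hundred_le_integral_abs_sqrt_sub_sqrt {Z : Ω → ℝ} {s : ℝ}
    (hZm : Measurable Z) (hZ : MemLp Z 4 μ) (hZ0 : 0 ≤ᵐ[μ] Z) (hs : 0 < s)
    (hmean : ∫ ω, Z ω ∂μ = s) (hvar : s ≤ 2 * ∫ ω, (Z ω - s) ^ 2 ∂μ)
    (h4 : ∫ ω, (Z ω - s) ^ 4 ∂μ ≤ 5 * (∫ ω, (Z ω - s) ^ 2 ∂μ) ^ 2) :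
    1 / 400 ≤ ∫ ω, |√(Z ω) - √s| ∂μ := by
  set v := ∫ ω, (Z ω - s) ^ 2 ∂μ
  have hv : 0 < v := by linarith
  have hZs : MemLp (fun ω ↦ Z ω - s) 4 μ := hZ.sub (memLp_const s)
  set A := {ω | 1 / 4 * v ≤ (Z ω - s) ^ 2}
  set B := {ω | 32 * s ≤ Z ω}
  have hA : 9 / 80 ≤ μ.real A := by
    have hW : MemLp (fun ω ↦ (Z ω - s) ^ 2) 2 μ := by
      rw [memLp_two_iff_integrable_sq (by fun_prop)]
      simpa only [← pow_mul] using hZs.integrable_pow_of_le (k := 4) le_rfl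
    have : (1 - 1 / 4) ^ 2 * v ^ 2 ≤ (∫ ω, ((Z ω - s) ^ 2) ^ 2 ∂μ) * μ.real A :=
      paley_zygmund (by fun_prop) hW (integral_nonneg fun _ ↦ sq_nonneg _) (by norm_num)
        (by norm_num)
    simp only [← pow_mul, Nat.reduceMul] at this
    nlinarith [mul_le_mul_of_nonneg_right h4 (measureReal_nonneg (μ := μ) (s := A)), pow_pos hv 2]
  have hB : μ.real B ≤ 1 / 32 := by
    have := mul_meas_ge_le_integral_of_nonneg hZ0 (hZ.integrable (by norm_num)) (32 * s)
    rw [hmean] at this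
    nlinarith
  have hAB : A \ B ≤ᵐ[μ] {ω | 1 / 20 ≤ |√(Z ω) - √s|} := by
    filter_upwards [hZ0] with ω hω ⟨hωA, hωB⟩
    have hωA : 1 / 4 * v ≤ (Z ω - s) ^ 2 := hωA
    exact one_div_twenty_le_abs_sqrt_sub_sqrt hω hs (by linarith) (lt_of_not_ge hωB)
  have hint : Integrable (fun ω ↦ |√(Z ω) - √s|) μ := by
    refine (hZs.integrable (by norm_num)).abs.div_const √s |>.mono' (by fun_prop) ?_
    filter_upwards [hZ0] with ω hω
    rw [Real.norm_eq_abs, abs_abs]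
    exact abs_sqrt_sub_sqrt_le_abs_sub_div hω hs
  calc 1 / 400 ≤ 1 / 20 * μ.real (A \ B) := by
        linarith [le_measureReal_sdiff (μ := μ) (s₁ := A) (s₂ := B)]
    _ ≤ 1 / 20 * μ.real {ω | 1 / 20 ≤ |√(Z ω) - √s|} := by
      gcongr 1 / 20 * ?_
      exact ENNReal.toReal_mono (measure_ne_top _ _) (measure_mono_ae hAB)
    _ ≤ ∫ ω, |√(Z ω) - √s| ∂μ :=
      mul_meas_ge_le_integral_of_nonneg (Filter.Eventually.of_forall fun _ ↦ abs_nonneg _) hint _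

end Moments

lemma integral_bernoulliLaw {p : ℝ} (hp0 : 0 ≤ p) (hp1 : p ≤ 1) (f : ℝ → ℝ) :
    ∫ x, f x ∂bernoulliLaw p = p * f 1 + (1 - p) * f 0 := by
  have hint : ∀ a (c : ℝ≥0∞), c ≠ ⊤ → Integrable f (c • Measure.dirac a) := fun a c hc ↦
    ((integrable_const (f a)).congr (ae_eq_dirac f).symm).smul_measure hc
  rw [bernoulliLaw, integral_add_measure (hint _ _ ENNReal.ofReal_ne_top)
    (hint _ _ ENNReal.ofReal_ne_top), integral_smul_measure, integral_smul_measure, integral_dirac,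
    integral_dirac, ENNReal.toReal_ofReal hp0, ENNReal.toReal_ofReal (by linarith), smul_eq_mul,
    smul_eq_mul]

section Bernoulli

variable {Ω : Type*} [MeasurableSpace Ω] {μ : Measure Ω} {X : Ω → ℝ} {p : ℝ}

lemma ae_eq_zero_or_eq_one_of_map_eq_bernoulliLaw (hX : Measurable X)
    (hlaw : μ.map X = bernoulliLaw p) : ∀ᵐ ω ∂μ, X ω = 0 ∨ X ω = 1 := by
  have h : ∀ᵐ x ∂bernoulliLaw p, x = 0 ∨ x = 1 := by
    rw [bernoulliLaw, ae_add_measure_iff]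
    exact ⟨Measure.ae_smul_measure (by simp) _, Measure.ae_smul_measure (by simp) _⟩
  rw [← hlaw] at h
  exact ae_of_ae_map hX.aemeasurable h

lemma memLp_of_map_eq_bernoulliLaw [IsFiniteMeasure μ] (hX : Measurable X)
    (hlaw : μ.map X = bernoulliLaw p) {q : ℝ≥0∞} : MemLp X q μ := by
  refine MemLp.of_bound hX.aestronglyMeasurable 1 ?_
  filter_upwards [ae_eq_zero_or_eq_one_of_map_eq_bernoulliLaw hX hlaw] with ω h
  rcases h with h | h <;> simp [h]

lemma integral_comp_of_map_eq_bernoulliLaw (hX : Measurable X) (hlaw : μ.map X = bernoulliLaw p)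
    (hp0 : 0 ≤ p) (hp1 : p ≤ 1) {f : ℝ → ℝ} (hf : Measurable f) :
    ∫ ω, f (X ω) ∂μ = p * f 1 + (1 - p) * f 0 := by
  rw [← integral_map hX.aemeasurable hf.aestronglyMeasurable, hlaw, integral_bernoulliLaw hp0 hp1]

end Bernoulli

section Binomial

variable {Ω : Type*} [MeasurableSpace Ω] {μ : Measure Ω} [IsProbabilityMeasure μ]
  {ι : Type*} [Fintype ι] {X : ι → Ω → ℝ} {p : ℝ}

theorem bernoulli_sum_moments (hX : ∀ i, Measurable (X i)) (hindep : iIndepFun X μ)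
    (hlaw : ∀ i, μ.map (X i) = bernoulliLaw p) (hp0 : 0 ≤ p) (hp1 : p ≤ 1) :
    ∫ ω, ∑ i, X i ω ∂μ = Fintype.card ι * p ∧
    ∫ ω, (∑ i, X i ω - Fintype.card ι * p) ^ 2 ∂μ = Fintype.card ι * (p * (1 - p)) ∧
    ∫ ω, (∑ i, X i ω - Fintype.card ι * p) ^ 4 ∂μ
      ≤ Fintype.card ι * (p * (1 - p)) + 3 * (Fintype.card ι * (p * (1 - p))) ^ 2 := by
  have hmom := fun i k ↦ integral_comp_of_map_eq_bernoulliLaw (hX i) (hlaw i) hp0 hp1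
    (f := fun x ↦ (x - p) ^ k) (by fun_prop)
  have hY : ∀ i, MemLp (fun ω ↦ X i ω - p) 4 μ := fun i ↦
    (memLp_of_map_eq_bernoulliLaw (hX i) (hlaw i)).sub (memLp_const p)
  have hY1 : ∀ i, ∫ ω, (X i ω - p) ∂μ = 0 := fun i ↦ by simpa [mul_comm] using hmom i 1
  have hindepY : iIndepFun (fun i ω ↦ X i ω - p) μ :=
    hindep.comp _ fun _ ↦ measurable_id.sub_const p
  have hcenter : ∀ ω, ∑ i, X i ω - Fintype.card ι * p = ∑ i, (X i ω - p) := by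
    simp [Finset.sum_sub_distrib]
  have h2 : p * (1 - p) ^ 2 + (1 - p) * (0 - p) ^ 2 = p * (1 - p) := by ring
  have h4 : p * (1 - p) ^ 4 + (1 - p) * (0 - p) ^ 4 = p * (1 - p) * (1 - 3 * (p * (1 - p))) := by
    ring
  simp only [hcenter]
  refine ⟨?_, ?_, ?_⟩
  · rw [integral_finsetSum _ fun i _ ↦
      (memLp_of_map_eq_bernoulliLaw (hX i) (hlaw i)).integrable le_rfl]
    have hXmean : ∀ i, ∫ ω, X i ω ∂μ = p := fun i ↦ by
      simpa using integral_comp_of_map_eq_bernoulliLaw (hX i) (hlaw i) hp0 hp1 measurable_id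
    simp [hXmean]
  · rw [integral_sum_sq_of_indepFun (fun i ↦ (hY i).mono_exponent (by norm_num))
      (fun i j hij ↦ hindepY.indepFun hij) hY1]
    simp only [hmom, h2, Finset.sum_const, Finset.card_univ, nsmul_eq_mul]
  · refine (integral_sum_pow_four_le hY hindepY hY1 _).trans ?_
    simp only [hmom, h2, h4, Finset.sum_const, Finset.card_univ, nsmul_eq_mul]
    have : 0 ≤ p * (1 - p) := mul_nonneg hp0 (by linarith)
    nlinarith [mul_nonneg (Fintype.card ι).cast_nonneg (α := ℝ) (mul_nonneg this this)]

end Binomial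

theorem stmt18 :
    ∃ c : ℝ, 0 < c ∧
      ∀ (m s : ℕ), 1 ≤ s → 2 * s ≤ m →
      ∀ (Ω : Type) (_ : MeasurableSpace Ω) (μ : Measure Ω),
        IsProbabilityMeasure μ →
        ∀ X : Fin m → Ω → ℝ,
          (∀ i, Measurable (X i)) →
          iIndepFun X μ →
          (∀ i, Measure.map (X i) μ = bernoulliLaw ((s : ℝ) / m)) →
          c ≤ ∫ ω, |Real.sqrt (∑ i, X i ω) - Real.sqrt s| ∂μ := by
  refine ⟨1 / 400, by norm_num, ?_⟩
  intro m s hs hsm Ω _ μ _ X hX hindep hlaw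
  have hs1 : (1 : ℝ) ≤ s := by exact_mod_cast hs
  have hsm' : 2 * (s : ℝ) ≤ m := by exact_mod_cast hsm
  have hm : (0 : ℝ) < m := by linarith
  have hp : (s : ℝ) / m ≤ 1 / 2 := by rw [div_le_iff₀ hm]; linarith
  obtain ⟨hmean, hvar, h4⟩ := bernoulli_sum_moments hX hindep hlaw (by positivity) (by linarith)
  simp only [Fintype.card_fin, ← mul_assoc, mul_div_cancel₀ _ hm.ne'] at hmean hvar h4
  have hZ0 : 0 ≤ᵐ[μ] fun ω ↦ ∑ i, X i ω := by
    filter_upwards [ae_all_iff.2 fun i ↦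
      ae_eq_zero_or_eq_one_of_map_eq_bernoulliLaw (hX i) (hlaw i)] with ω h
    exact Finset.sum_nonneg fun i _ ↦ by rcases h i with h | h <;> simp [h]
  refine one_div_four_hundred_le_integral_abs_sqrt_sub_sqrt (Z := fun ω ↦ ∑ i, X i ω)
    (Finset.measurable_sum _ fun i _ ↦ hX i)
    (memLp_finsetSum _ fun i _ ↦ memLp_of_map_eq_bernoulliLaw (hX i) (hlaw i)) hZ0
    (by positivity) hmean (by rw [hvar]; nlinarith) ?_
  have hv : (s : ℝ) / 2 ≤ s * (1 - s / m) := by nlinarith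
  rw [hvar]
  nlinarith
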